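/- arXiv:1806.04889 — 4 statements merged into one kernel-verified Lean document; each statement's English description precedes it below -/
import Mathlib

section
/- For γ ∈ (0,1), δ ≠ 0, σ > 0 and T > 0, the function V_Z²(s,t) = (σ²/(2δ)) · ((1 − e^{−2δt}) − γ(2−γ)(1 − e^{−2δs})) / (1 − γ + γe^{−δs})² on the set B = {(s,t) : 0 ≤ s ≤ t ≤ T} attains its unique global maximum at the point (s,t) = (0,T), with maximal value a² = (σ²/(2δ))(1 − e^{−2δT}). -/
/-!
Put `x = e^{-δs}`, `u = e^{-2δt}`, `E = e^{-2δT}` and `g = 1 - γ + γx`. Then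
`a² - V_Z²(s,t) = σ² / (2δ²g²) · (γ P · δ(1 - x) + δ(u - E))` with
`P = 2(1 - γ)x + E(2 - γ + γx) > 0`. Both `δ(1 - x) = δ(e^{-δ·0} - e^{-δs})` and
`δ(u - E) = δ(e^{-2δt} - e^{-2δT})` are nonnegative because `exp` is increasing,
and the first is positive when `s > 0`, the second when `t < T`.
-/

open Real

lemma mul_exp_neg_mul_sub_nonneg (δ : ℝ) {a b : ℝ} (hab : a ≤ b) :
    0 ≤ δ * (exp (-δ * a) - exp (-δ * b)) := by
  rcases le_total 0 δ with hδ | hδ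
  · exact mul_nonneg hδ (sub_nonneg.2 (exp_le_exp.2 (by nlinarith)))
  · exact mul_nonneg_of_nonpos_of_nonpos hδ (sub_nonpos.2 (exp_le_exp.2 (by nlinarith)))

lemma mul_exp_neg_mul_sub_pos {δ : ℝ} (hδ : δ ≠ 0) {a b : ℝ} (hab : a < b) :
    0 < δ * (exp (-δ * a) - exp (-δ * b)) := by
  rcases hδ.lt_or_gt with hδ | hδ
  · exact mul_pos_of_neg_of_neg hδ (sub_neg.2 (exp_lt_exp.2 (by nlinarith)))
  · exact mul_pos hδ (sub_pos.2 (exp_lt_exp.2 (by nlinarith)))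

lemma varZ_gap_eq (γ δ σ x u E : ℝ) (hδ : δ ≠ 0) (hg : 1 - γ + γ * x ≠ 0) :
    σ ^ 2 / (2 * δ) * (1 - E) -
        σ ^ 2 / (2 * δ * (1 - γ + γ * x) ^ 2) * ((1 - u) - γ * (2 - γ) * (1 - x ^ 2)) =
      σ ^ 2 / (2 * δ ^ 2 * (1 - γ + γ * x) ^ 2) *
        (γ * (2 * (1 - γ) * x + E * (2 - γ + γ * x)) * (δ * (1 - x)) + δ * (u - E)) := by
  field_simp
  ring

theorem varZ_unique_max_general (γ δ σ T : ℝ) (hγ : γ ∈ Set.Ioo (0:ℝ) 1) (hδ : δ ≠ 0)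
    (hσ : 0 < σ) (V2 : ℝ → ℝ → ℝ)
    (hV2 : ∀ s t : ℝ, V2 s t =
      σ ^ 2 / (2 * δ * (1 - γ + γ * Real.exp (-δ * s)) ^ 2) *
        ((1 - Real.exp (-2 * δ * t)) - γ * (2 - γ) * (1 - Real.exp (-2 * δ * s)))) :
    V2 0 T = σ ^ 2 / (2 * δ) * (1 - Real.exp (-2 * δ * T)) ∧
      ∀ s t : ℝ, 0 ≤ s → s ≤ t → t ≤ T → (s, t) ≠ ((0 : ℝ), T) →
        V2 s t < V2 0 T := by
  obtain ⟨hγ0, hγ1⟩ := hγ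
  have hV0T : V2 0 T = σ ^ 2 / (2 * δ) * (1 - exp (-2 * δ * T)) := by simp [hV2]
  refine ⟨hV0T, fun s t hs _ htT hne => ?_⟩
  have hexp_two_mul : exp (-2 * δ * s) = exp (-δ * s) ^ 2 := by rw [← exp_nat_mul]; ring_nf
  have hexp_pos := exp_pos (-δ * s)
  have hg : 0 < 1 - γ + γ * exp (-δ * s) := by nlinarith
  have hP : 0 < 2 * (1 - γ) * exp (-δ * s) + exp (-2 * δ * T) * (2 - γ + γ * exp (-δ * s)) := by
    have := exp_pos (-2 * δ * T); nlinarith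
  have hu_nonneg : 0 ≤ δ * (exp (-2 * δ * t) - exp (-2 * δ * T)) := by
    have h := mul_exp_neg_mul_sub_nonneg (2 * δ) htT
    rw [show -(2 * δ) = -2 * δ by ring] at h
    linarith
  rw [hV0T, hV2, hexp_two_mul, ← sub_pos, varZ_gap_eq γ δ σ _ _ _ hδ hg.ne']
  refine mul_pos (by positivity) ?_
  rcases hs.lt_or_eq with hs_pos | rfl
  · have hx_strict : 0 < δ * (1 - exp (-δ * s)) := by
      simpa using mul_exp_neg_mul_sub_pos hδ hs_pos
    exact add_pos_of_pos_of_nonneg (mul_pos (mul_pos hγ0 hP) hx_strict) hu_nonneg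
  · have htT : t < T := htT.lt_of_ne fun h => hne (by rw [h])
    have hu_strict : 0 < δ * (exp (-2 * δ * t) - exp (-2 * δ * T)) := by
      have h := mul_exp_neg_mul_sub_pos (mul_ne_zero two_ne_zero hδ) htT
      rw [show -(2 * δ) = -2 * δ by ring] at h
      linarith
    simpa using hu_strict

/-- The variance function `V_Z²(s,t)` of the tax risk model attains its
unique global maximum on `B = {(s,t) : 0 ≤ s ≤ t ≤ T}` at `(0,T)`, with maximal
value `a² = (σ²/(2δ))(1 − e^{−2δT})`. -/
theorem varZ_unique_max (γ δ σ T : ℝ) (hγ : γ ∈ Set.Ioo (0:ℝ) 1) (hδ : δ ≠ 0)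
    (hσ : 0 < σ) (hT : 0 < T) (V2 : ℝ → ℝ → ℝ)
    (hV2 : ∀ s t : ℝ, V2 s t =
      σ ^ 2 / (2 * δ * (1 - γ + γ * Real.exp (-δ * s)) ^ 2) *
        ((1 - Real.exp (-2 * δ * t)) - γ * (2 - γ) * (1 - Real.exp (-2 * δ * s)))) :
    V2 0 T = σ ^ 2 / (2 * δ) * (1 - Real.exp (-2 * δ * T)) ∧
      ∀ s t : ℝ, 0 ≤ s → s ≤ t → t ≤ T → (s, t) ≠ ((0 : ℝ), T) →
        V2 s t < V2 0 T :=
  varZ_unique_max_general γ δ σ T hγ hδ hσ V2 hV2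
end

section
/- For γ ∈ (0,1), δ > 0, σ > 0, c > 0 and u sufficiently large, the function F_u(s,t) = V_Z(s,t)/G_u(s,t), where V_Z²(s,t) = (σ²/(2δ))((1−t) − γ(2−γ)(1−s)) and G_u(s,t) = u − γ(u + c/δ)(1 − s^{1/2}) + (c/δ)(1 − t^{1/2}), defined on {(s,t) : 0 < t ≤ s ≤ 1}, attains its maximum at the unique point (s,t) = (1, t_u) where t_u = (c/(δu + c))². -/
/-!
Write `a = √s`, `b = √t`, `k = c/δ`, `M = u + k`, so that
`G_u = M (1 - γ + γ a) - k b` and `u (u + 2k) = M² - k²`. The polynomial identity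
`G_u² - (V_Z²/C) (M² - k²) = (k (1 - γ + γ a) - M b)² + 2 γ (1 - γ) (M² - k²) a (1 - a)`
with `C = σ²/(2δ)` shows `F_u² ≤ C / (u (u + 2k))` on the domain, with equality only for
`a = 1`, `b = k/M`, i.e. at `(1, t_u)`. This already holds for every `u > 0`.
-/

open Real

/-- The paper's `G_u(s,t)`, with `k = c/δ`. -/
noncomputable def gain (γ k u s t : ℝ) : ℝ :=
  u - γ * (u + k) * (1 - √s) + k * (1 - √t)

/-- The paper's `V_Z(s,t)²`, with `C = σ²/(2δ)`. -/
def varZ (γ C s t : ℝ) : ℝ :=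
  C * ((1 - t) - γ * (2 - γ) * (1 - s))

theorem gain_sq_sub_mul_eq (γ k M a b : ℝ) :
    (M * (1 - γ + γ * a) - k * b) ^ 2
        - ((1 - b ^ 2) - γ * (2 - γ) * (1 - a ^ 2)) * (M ^ 2 - k ^ 2)
      = (k * (1 - γ + γ * a) - M * b) ^ 2
        + 2 * γ * (1 - γ) * (M ^ 2 - k ^ 2) * (a * (1 - a)) := by
  ring

theorem mul_lt_gain_sq {γ k M a b : ℝ} (hγ : γ ∈ Set.Ioo (0 : ℝ) 1) (hkM : k ^ 2 < M ^ 2)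
    (ha0 : 0 < a) (ha1 : a ≤ 1) (hne : (a, b) ≠ (1, k / M)) :
    ((1 - b ^ 2) - γ * (2 - γ) * (1 - a ^ 2)) * (M ^ 2 - k ^ 2)
      < (M * (1 - γ + γ * a) - k * b) ^ 2 := by
  obtain ⟨hγ0, hγ1⟩ := hγ
  have hN : 0 < M ^ 2 - k ^ 2 := sub_pos.2 hkM
  rw [← sub_pos, gain_sq_sub_mul_eq]
  rcases ha1.eq_or_lt with rfl | ha1
  · have hM : M ≠ 0 := by rintro rfl; nlinarith [sq_nonneg k]
    have hb : k - M * b ≠ 0 := fun h ↦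
      hne (by rw [eq_div_of_mul_eq hM (by linarith : b * M = k)])
    simpa using pow_pos (abs_pos.2 hb) 2
  · have hpos : 0 < 2 * γ * (1 - γ) * (M ^ 2 - k ^ 2) * (a * (1 - a)) := by
      have haa : 0 < a * (1 - a) := mul_pos ha0 (sub_pos.2 ha1)
      have hγγ : 0 < 1 - γ := sub_pos.2 hγ1
      positivity
    positivity

theorem gain_eq (γ k u s t : ℝ) :
    gain γ k u s t = (u + k) * (1 - γ + γ * √s) - k * √t := by
  unfold gain; ring

theorem gain_pos {γ k u s t : ℝ} (hγ : γ ≤ 1) (hk : 0 ≤ k) (hu : 0 < u)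
    (hts : t ≤ s) (hs1 : s ≤ 1) (hs0 : 0 < s) : 0 < gain γ k u s t := by
  have ha : 0 < √s := sqrt_pos.2 hs0
  have ha1 : √s ≤ 1 := sqrt_le_one.2 hs1
  have hba : √t ≤ √s := sqrt_le_sqrt hts
  -- `G_u ≥ M a - k a = u a`, since `1 - γ + γ a ≥ a` and `b ≤ a`.
  rw [gain_eq]
  nlinarith [mul_nonneg (sub_nonneg.2 hγ) (sub_nonneg.2 ha1), mul_pos hu ha, sqrt_nonneg t]

theorem sqrt_div_eq_sqrt_div_sq {x y : ℝ} (hy : 0 < y) : √x / y = √(x / y ^ 2) := by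
  rw [sqrt_div' x (sq_nonneg y), sqrt_sq hy.le]

section

variable {γ k C u : ℝ}

theorem sqrt_varZ_div_gain_lt (hγ : γ ∈ Set.Ioo (0 : ℝ) 1) (hk : 0 ≤ k) (hC : 0 < C)
    (hu : 0 < u) {s t : ℝ} (ht : 0 < t) (hts : t ≤ s) (hs1 : s ≤ 1)
    (hne : (s, t) ≠ (1, (k / (u + k)) ^ 2)) :
    √(varZ γ C s t) / gain γ k u s t < √(C / (u * (u + 2 * k))) := by
  have hs0 : 0 < s := ht.trans_le hts
  have hG := gain_pos hγ.2.le hk hu hts hs1 hs0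
  have hne' : (√s, √t) ≠ (1, k / (u + k)) := by
    intro h
    obtain ⟨ha, hb⟩ := Prod.mk.inj h
    refine hne ?_
    rw [sqrt_eq_one] at ha
    rw [← hb, sq_sqrt ht.le, ha]
  have key := mul_lt_gain_sq (M := u + k) hγ (by nlinarith) (sqrt_pos.2 hs0)
    (sqrt_le_one.2 hs1) hne'
  rw [sq_sqrt hs0.le, sq_sqrt ht.le] at key
  rw [sqrt_div_eq_sqrt_div_sq hG, sqrt_lt_sqrt_iff_of_pos (by positivity),
    div_lt_div_iff₀ (by positivity) (by positivity), gain_eq]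
  calc varZ γ C s t * (u * (u + 2 * k))
      = C * (((1 - t) - γ * (2 - γ) * (1 - s)) * ((u + k) ^ 2 - k ^ 2)) := by unfold varZ; ring
    _ < C * ((u + k) * (1 - γ + γ * √s) - k * √t) ^ 2 := mul_lt_mul_of_pos_left key hC

theorem sqrt_varZ_div_gain_opt (hk : 0 ≤ k) (hu : 0 < u) :
    √(varZ γ C 1 ((k / (u + k)) ^ 2)) / gain γ k u 1 ((k / (u + k)) ^ 2)
      = √(C / (u * (u + 2 * k))) := by
  have hM : 0 < u + k := by linarith
  have hG : gain γ k u 1 ((k / (u + k)) ^ 2) = u * (u + 2 * k) / (u + k) := by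
    rw [gain, sqrt_one, sqrt_sq (by positivity)]
    field_simp
    ring
  rw [hG, sqrt_div_eq_sqrt_div_sq (by positivity)]
  congr 1
  unfold varZ
  field_simp
  ring

end

/-- For `γ ∈ (0,1)`, `δ, σ, c > 0` and `u` sufficiently large, the function
`F_u(s,t) = V_Z(s,t)/G_u(s,t)` on `{(s,t) : 0 < t ≤ s ≤ 1}` attains its maximum at the
unique point `(1, t_u)` with `t_u = (c/(δu+c))²`. -/
theorem Fu_unique_max (γ δ σ c : ℝ) (hγ : γ ∈ Set.Ioo (0:ℝ) 1) (hδ : 0 < δ)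
    (hσ : 0 < σ) (hc : 0 < c)
    (V : ℝ → ℝ → ℝ) (G : ℝ → ℝ → ℝ → ℝ) (F : ℝ → ℝ → ℝ → ℝ) (tu : ℝ → ℝ)
    (hV : ∀ s t : ℝ, V s t =
      Real.sqrt (σ ^ 2 / (2 * δ) * ((1 - t) - γ * (2 - γ) * (1 - s))))
    (hG : ∀ u s t : ℝ, G u s t =
      u - γ * (u + c / δ) * (1 - Real.sqrt s) + c / δ * (1 - Real.sqrt t))
    (hF : ∀ u s t : ℝ, F u s t = V s t / G u s t)
    (htu : ∀ u : ℝ, tu u = (c / (δ * u + c)) ^ 2) :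
    ∃ u₀ : ℝ, ∀ u : ℝ, u₀ ≤ u →
      ∀ s t : ℝ, 0 < t → t ≤ s → s ≤ 1 → (s, t) ≠ ((1 : ℝ), tu u) →
        F u s t < F u 1 (tu u) := by
  have hk : 0 ≤ c / δ := (div_pos hc hδ).le
  have hC : 0 < σ ^ 2 / (2 * δ) := by positivity
  have hFeq : ∀ u s t, F u s t = √(varZ γ (σ ^ 2 / (2 * δ)) s t) / gain γ (c / δ) u s t :=
    fun u s t ↦ by rw [hF, hV, hG, varZ, gain]
  refine ⟨1, fun u hu s t ht hts hs1 hne ↦ ?_⟩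
  have hu0 : 0 < u := by linarith
  have htu' : tu u = (c / δ / (u + c / δ)) ^ 2 := by
    rw [htu]; congr 1; field_simp
  rw [htu'] at hne ⊢
  rw [hFeq, hFeq, sqrt_varZ_div_gain_opt hk hu0]
  exact sqrt_varZ_div_gain_lt hγ hk hC hu0 ht hts hs1 hne
end

section
/- For γ ∈ (0,1), δ > 0, c > 0 and u > 0 with t_u = (c/(δu+c))², the quantity D(s,t) := (G_u(s,t)·V_Z(1,t_u))² − (G_u(1,t_u)·V_Z(s,t))², where G_u(s,t) = (u+c/δ)(1−γ(1−√s)) − (c/δ)√t and V_Z²(s,t) = (σ²/(2δ))((1−t) − γ(2−γ)(1−s)), satisfies D(s,t) ~ (σ²/(2δ))·u²·((√t − √t_u)² + γ(1−γ)(1−s)) as u → ∞ uniformly for (s,t) → (1, t_u); in particular, at s = 1 the leading term is (σ²/(2δ))u²(√t − √t_u)². -/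
/-!
Write `a = c/δ`, `ρ = a/(u+a) = √t_u`, `d = √t - √t_u` and `e = 1 - √s`. Completing the square,
`D(s,t) = (σ²/(2δ)) (u+a)² (1-ρ²) ((d + ργe)² + 2γ(1-γ)(1-ρ²)(1-e)e)`, while the comparison term
is `(σ²/(2δ)) (u+a)² (1-ρ)² (d² + γ(1-γ)e(2-e))`. The second bracket dominates both `d²` and
`γ(1-γ)e`, so the two brackets differ by a relative error of at most `5ρ/(1-γ) + e`, uniformly
in `d`. As `ρ → 0` when `u → ∞` and `e ≤ 1 - s`, the ratio tends to `1`.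
-/

open Filter Topology

def scaledD (γ ρ d e : ℝ) : ℝ :=
  (d + ρ * γ * e) ^ 2 + 2 * γ * (1 - γ) * (1 - ρ ^ 2) * (1 - e) * e

def scaledLead (γ d e : ℝ) : ℝ := d ^ 2 + γ * (1 - γ) * e * (2 - e)

lemma sq_mul_sub_sq_mul_eq_scaledD (γ K u a ρ x τ : ℝ) (hM : u + a ≠ 0)
    (hρ : ρ = a / (u + a)) :
    ((u + a) * (1 - γ * (1 - x)) - a * τ) ^ 2 * (K * (1 - ρ ^ 2))
      - ((u + a) - a * ρ) ^ 2 * (K * ((1 - τ ^ 2) - γ * (2 - γ) * (1 - x ^ 2)))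
      = K * (u + a) ^ 2 * (1 - ρ ^ 2) * scaledD γ ρ (τ - ρ) (1 - x) := by
  subst hρ
  unfold scaledD
  field_simp
  ring

lemma sq_mul_scaledLead_eq (γ u a ρ d x : ℝ) (hM : u + a ≠ 0) (hρ : ρ = a / (u + a)) :
    u ^ 2 * (d ^ 2 + γ * (1 - γ) * (1 - x ^ 2))
      = (u + a) ^ 2 * (1 - ρ) ^ 2 * scaledLead γ d (1 - x) := by
  subst hρ
  unfold scaledLead
  field_simp
  ring

lemma div_eq_scaledD_div_scaledLead (γ K u a ρ x τ : ℝ) (hK : K ≠ 0) (hu : 0 < u)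
    (ha : 0 ≤ a) (hρ : ρ = a / (u + a)) (hL : scaledLead γ (τ - ρ) (1 - x) ≠ 0) :
    (((u + a) * (1 - γ * (1 - x)) - a * τ) ^ 2 * (K * (1 - ρ ^ 2))
      - ((u + a) - a * ρ) ^ 2 * (K * ((1 - τ ^ 2) - γ * (2 - γ) * (1 - x ^ 2))))
      / (K * u ^ 2 * ((τ - ρ) ^ 2 + γ * (1 - γ) * (1 - x ^ 2)))
      = (1 + ρ) / (1 - ρ) * (scaledD γ ρ (τ - ρ) (1 - x) / scaledLead γ (τ - ρ) (1 - x)) := by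
  have hM : u + a ≠ 0 := by positivity
  have hρ1 : 1 - ρ ≠ 0 := by
    rw [hρ, one_sub_div hM, add_sub_cancel_right]; exact div_ne_zero hu.ne' hM
  rw [sq_mul_sub_sq_mul_eq_scaledD γ K u a ρ x τ hM hρ, mul_assoc K (u ^ 2),
    sq_mul_scaledLead_eq γ u a ρ (τ - ρ) x hM hρ]
  field_simp
  ring

lemma abs_cross_term_le {γ ρ d e : ℝ} (hγ0 : 0 ≤ γ) (hγ1 : γ ≤ 1) (hρ0 : 0 ≤ ρ) (hρ1 : ρ ≤ 1)
    (he0 : 0 ≤ e) (he1 : e ≤ 1) :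
    |2 * ρ * γ * d * e + ρ ^ 2 * γ ^ 2 * e ^ 2| ≤ ρ * d ^ 2 + 2 * ρ * γ * e := by
  have hργ : 0 ≤ ρ * γ := mul_nonneg hρ0 hγ0
  have hργe : ρ * γ * e ≤ 1 := mul_le_one₀ (mul_le_one₀ hρ1 hγ0 hγ1) he0 he1
  have h1 : 0 ≤ ρ * (1 - γ) * d ^ 2 := mul_nonneg (mul_nonneg hρ0 (by linarith)) (sq_nonneg d)
  have h2 : 0 ≤ ρ * γ * (e * (1 - e)) := mul_nonneg hργ (mul_nonneg he0 (by linarith))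
  have h3 : 0 ≤ ρ * γ * e * (1 - ρ * γ * e) :=
    mul_nonneg (mul_nonneg hργ he0) (by linarith)
  rw [abs_le]; constructor
  · nlinarith [mul_nonneg hργ (sq_nonneg (d + e)), sq_nonneg (ρ * γ * e), mul_nonneg hργ he0]
  · nlinarith [mul_nonneg hργ (sq_nonneg (d - e))]

section
variable {γ d e : ℝ}

lemma sq_le_scaledLead (hγ : γ ∈ Set.Ioo (0 : ℝ) 1) (he : e ∈ Set.Icc (0 : ℝ) 1) :
    d ^ 2 ≤ scaledLead γ d e := by
  have := mul_pos hγ.1 (sub_pos.2 hγ.2)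
  have : 0 ≤ 2 - e := by linarith [he.2]
  exact le_add_of_nonneg_right (by have := he.1; positivity)

lemma mul_le_scaledLead (hγ : γ ∈ Set.Ioo (0 : ℝ) 1) (he : e ∈ Set.Icc (0 : ℝ) 1) :
    γ * (1 - γ) * e ≤ scaledLead γ d e :=
  calc γ * (1 - γ) * e ≤ γ * (1 - γ) * e * (2 - e) :=
        le_mul_of_one_le_right (by have := mul_pos hγ.1 (sub_pos.2 hγ.2); have := he.1; positivity)
          (by linarith [he.2])
    _ ≤ scaledLead γ d e := le_add_of_nonneg_left (sq_nonneg d)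

lemma scaledLead_pos (hγ : γ ∈ Set.Ioo (0 : ℝ) 1) (he : e ∈ Set.Icc (0 : ℝ) 1)
    (hde : d ≠ 0 ∨ e ≠ 0) : 0 < scaledLead γ d e := by
  rcases hde with hd | he0
  · exact (pow_two_pos_of_ne_zero hd).trans_le (sq_le_scaledLead hγ he)
  · exact (mul_pos (mul_pos hγ.1 (sub_pos.2 hγ.2)) (lt_of_le_of_ne he.1 (Ne.symm he0))).trans_le
      (mul_le_scaledLead hγ he)

lemma abs_scaledD_div_sub_one_le {ρ : ℝ} (hγ : γ ∈ Set.Ioo (0 : ℝ) 1)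
    (hρ : ρ ∈ Set.Icc (0 : ℝ) 1) (he : e ∈ Set.Icc (0 : ℝ) 1) (hL : 0 < scaledLead γ d e) :
    |scaledD γ ρ d e / scaledLead γ d e - 1| ≤ 5 * ρ / (1 - γ) + e := by
  obtain ⟨hρ0, hρ1⟩ := hρ
  have h1γ : 0 < 1 - γ := sub_pos.2 hγ.2
  set L := scaledLead γ d e
  set q := γ * (1 - γ) * e
  have hq : 0 ≤ q := mul_nonneg (mul_pos hγ.1 h1γ).le he.1
  have hloss : 0 ≤ q * (2 * ρ ^ 2 * (1 - e) + e) := by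
    have : 0 ≤ 1 - e := sub_nonneg.2 he.2
    have := he.1
    positivity
  have hloss' : q * (2 * ρ ^ 2 * (1 - e) + e) ≤ 2 * ρ * q + e * q := by
    nlinarith [mul_nonneg (mul_nonneg hq hρ0) (sub_nonneg.2 hρ1),
      mul_nonneg (mul_nonneg hq (sq_nonneg ρ)) he.1]
  have hdiff : scaledD γ ρ d e - L
      = (2 * ρ * γ * d * e + ρ ^ 2 * γ ^ 2 * e ^ 2) - q * (2 * ρ ^ 2 * (1 - e) + e) := by
    simp only [scaledD, L, scaledLead, q]; ring
  rw [div_sub_one hL.ne', abs_div, abs_of_pos hL, div_le_iff₀ hL, hdiff]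
  calc _ ≤ |2 * ρ * γ * d * e + ρ ^ 2 * γ ^ 2 * e ^ 2| + |q * (2 * ρ ^ 2 * (1 - e) + e)| :=
        abs_sub _ _
    _ ≤ ρ * d ^ 2 + 2 * ρ / (1 - γ) * q + 2 * ρ * q + e * q := by
        have hcross := abs_cross_term_le hγ.1.le hγ.2.le hρ0 hρ1 he.1 he.2 (d := d)
        have : 2 * ρ / (1 - γ) * q = 2 * ρ * γ * e := by simp only [q]; field_simp
        rw [abs_of_nonneg hloss]
        linarith
    _ ≤ ρ * L + 2 * ρ / (1 - γ) * L + 2 * ρ * L + e * L := by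
        have := he.1
        gcongr
        · exact sq_le_scaledLead hγ he
        all_goals exact mul_le_scaledLead hγ he
    _ ≤ (5 * ρ / (1 - γ) + e) * L := by
        have : ρ ≤ ρ / (1 - γ) := le_div_self hρ0 h1γ (by linarith [hγ.1])
        rw [mul_div_assoc, mul_div_assoc]
        nlinarith [hL.le]
end

lemma abs_div_mul_sub_one_le {ρ θ b : ℝ} (hρ : ρ ∈ Set.Ico (0 : ℝ) 1) (hθ : |θ - 1| ≤ b) :
    |(1 + ρ) / (1 - ρ) * θ - 1| ≤ ((1 + ρ) * b + 2 * ρ) / (1 - ρ) := by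
  obtain ⟨hρ0, hρ1⟩ := hρ
  have h1ρ : 0 < 1 - ρ := sub_pos.2 hρ1
  have : (1 + ρ) / (1 - ρ) * θ - 1 = ((1 + ρ) * (θ - 1) + 2 * ρ) / (1 - ρ) := by
    field_simp; ring
  rw [this, abs_div, abs_of_pos h1ρ]
  gcongr
  calc |(1 + ρ) * (θ - 1) + 2 * ρ| ≤ |(1 + ρ) * (θ - 1)| + |2 * ρ| := abs_add_le _ _
    _ = (1 + ρ) * |θ - 1| + 2 * ρ := by
        rw [abs_mul, abs_of_nonneg (show 0 ≤ 1 + ρ by linarith),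
          abs_of_nonneg (show 0 ≤ 2 * ρ by linarith)]
    _ ≤ (1 + ρ) * b + 2 * ρ := by gcongr

lemma exists_abs_ratio_sub_one_le {γ ε : ℝ} (hγ : γ ∈ Set.Ioo (0 : ℝ) 1) (hε : 0 < ε) :
    ∃ η > 0, ∀ ρ d e, ρ ∈ Set.Icc 0 η → e ∈ Set.Icc 0 η → 0 < scaledLead γ d e →
      |(1 + ρ) / (1 - ρ) * (scaledD γ ρ d e / scaledLead γ d e) - 1| ≤ ε := by
  set β : ℝ × ℝ → ℝ := fun p ↦ ((1 + p.1) * (5 * p.1 / (1 - γ) + p.2) + 2 * p.1) / (1 - p.1)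
  have hβ : ContinuousAt β 0 := by
    have : 1 - γ ≠ 0 := (sub_pos.2 hγ.2).ne'
    fun_prop (disch := first | assumption | norm_num)
  have hβ0 : β 0 = 0 := by simp [β]
  obtain ⟨r, hr, hβr⟩ := Metric.eventually_nhds_iff.1
    (hβ.tendsto.eventually_lt_const (hβ0 ▸ hε))
  refine ⟨min (r / 2) (1 / 2), by positivity, fun ρ d e hρ he hL ↦ ?_⟩
  have hρ1 : ρ < 1 := hρ.2.trans_lt ((min_le_right _ _).trans_lt (by norm_num))
  have he1 : e ≤ 1 := he.2.trans ((min_le_right _ _).trans (by norm_num))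
  have hdist : dist (ρ, e) 0 < r := by
    have hr2 : min (r / 2) (1 / 2) < r := (min_le_left _ _).trans_lt (half_lt_self hr)
    rw [Prod.dist_eq, max_lt_iff, Prod.fst_zero, Prod.snd_zero, Real.dist_0_eq_abs,
      Real.dist_0_eq_abs, abs_of_nonneg hρ.1, abs_of_nonneg he.1]
    exact ⟨hρ.2.trans_lt hr2, he.2.trans_lt hr2⟩
  calc _ ≤ β (ρ, e) := abs_div_mul_sub_one_le ⟨hρ.1, hρ1⟩
          (abs_scaledD_div_sub_one_le hγ ⟨hρ.1, hρ1.le⟩ ⟨he.1, he1⟩ hL)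
    _ ≤ ε := (hβr hdist).le

/-- With `t_u = (c/(δu+c))²`,
`D(s,t) = (G_u(s,t)V_Z(1,t_u))² − (G_u(1,t_u)V_Z(s,t))²` satisfies
`D(s,t) ~ (σ²/(2δ))u²((√t − √t_u)² + γ(1−γ)(1−s))` as `u → ∞` along `(s,t) → (1,t_u)`:
the ratio is within `ε` of `1` for `u` large and `(s,t)` close enough to `(1,t_u)`. -/
theorem D_asymptotic (γ δ c σ : ℝ) (hγ : γ ∈ Set.Ioo (0:ℝ) 1) (hδ : 0 < δ)
    (hc : 0 < c) (hσ : 0 < σ)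
    (V2 : ℝ → ℝ → ℝ) (G : ℝ → ℝ → ℝ → ℝ) (tu : ℝ → ℝ) (D : ℝ → ℝ → ℝ → ℝ)
    (hV2 : ∀ s t : ℝ, V2 s t = σ ^ 2 / (2 * δ) * ((1 - t) - γ * (2 - γ) * (1 - s)))
    (hG : ∀ u s t : ℝ, G u s t =
      (u + c / δ) * (1 - γ * (1 - Real.sqrt s)) - c / δ * Real.sqrt t)
    (htu : ∀ u : ℝ, tu u = (c / (δ * u + c)) ^ 2)
    (hD : ∀ u s t : ℝ, D u s t =
      (G u s t) ^ 2 * V2 1 (tu u) - (G u 1 (tu u)) ^ 2 * V2 s t) :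
    ∀ ε : ℝ, 0 < ε → ∃ u₀ : ℝ, ∃ η : ℝ, 0 < η ∧
      ∀ u : ℝ, u₀ ≤ u → ∀ s t : ℝ, 0 < t → t ≤ s → s ≤ 1 →
        1 - s ≤ η → |t - tu u| ≤ η → (s, t) ≠ ((1 : ℝ), tu u) →
        |D u s t /
            (σ ^ 2 / (2 * δ) * u ^ 2 *
              ((Real.sqrt t - Real.sqrt (tu u)) ^ 2 + γ * (1 - γ) * (1 - s))) - 1|
          ≤ ε := by
  intro ε hε
  set a := c / δ with ha
  set K := σ ^ 2 / (2 * δ)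
  have ha0 : 0 ≤ a := by positivity
  obtain ⟨η, hη, hratio⟩ := exists_abs_ratio_sub_one_le hγ hε
  have hρ_lim : Tendsto (fun u ↦ a / (u + a)) atTop (𝓝 0) :=
    tendsto_const_nhds.div_atTop (tendsto_atTop_add_const_right _ a tendsto_id)
  obtain ⟨u₀, hu₀⟩ := eventually_atTop.1
    ((hρ_lim.eventually_le_const hη).and (eventually_gt_atTop 0))
  refine ⟨u₀, η, hη, fun u hu s t ht hts hs1 hsη _ hne ↦ ?_⟩
  obtain ⟨hρη, hu0⟩ := hu₀ u hu
  set ρ := a / (u + a) with hρ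
  have htu_eq : tu u = ρ ^ 2 := by
    rw [htu, hρ, ha]; congr 1; field_simp
  have hsqrt_tu : √(tu u) = ρ := by rw [htu_eq, Real.sqrt_sq (by positivity)]
  obtain ⟨x, hx0, rfl⟩ : ∃ x, 0 ≤ x ∧ x ^ 2 = s :=
    ⟨√s, Real.sqrt_nonneg s, Real.sq_sqrt (ht.le.trans hts)⟩
  obtain ⟨τ, hτ0, rfl⟩ : ∃ τ, 0 ≤ τ ∧ τ ^ 2 = t := ⟨√t, Real.sqrt_nonneg t, Real.sq_sqrt ht.le⟩
  have hx1 : x ≤ 1 := (pow_le_one_iff_of_nonneg hx0 two_ne_zero).1 hs1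
  have he : 1 - x ∈ Set.Icc 0 η :=
    ⟨by linarith, by nlinarith [pow_le_of_le_one hx0 hx1 two_ne_zero]⟩
  have hL : 0 < scaledLead γ (τ - ρ) (1 - x) := by
    refine scaledLead_pos hγ ⟨he.1, by linarith⟩ ?_
    contrapose! hne
    rw [show x = 1 by linarith [hne.2], show τ = ρ by linarith [hne.1], htu_eq, one_pow]
  have hquot : D u (x ^ 2) (τ ^ 2) / (K * u ^ 2 * ((τ - ρ) ^ 2 + γ * (1 - γ) * (1 - x ^ 2)))
      = (1 + ρ) / (1 - ρ) * (scaledD γ ρ (τ - ρ) (1 - x) / scaledLead γ (τ - ρ) (1 - x)) := by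
    rw [← div_eq_scaledD_div_scaledLead γ K u a ρ x τ (by positivity) hu0 ha0 hρ hL.ne', hD, hG,
      hG, hV2, hV2, hsqrt_tu, htu_eq, Real.sqrt_sq hx0, Real.sqrt_sq hτ0, Real.sqrt_one]
    ring
  rw [Real.sqrt_sq hτ0, hsqrt_tu, hquot]
  exact hratio ρ (τ - ρ) (1 - x) ⟨by positivity, hρη⟩ he hL
end

section
/- For γ ∈ (0,1), δ > 0, c > 0, σ > 0 and u > 0, let F_u(s,t) = V_Z(s,t)/G_u(s,t), where V_Z²(s,t) = (σ²/(2δ))((1−t) − γ(2−γ)(1−s)) and G_u(s,t) = u − γ(u+c/δ)(1−√s) + (c/δ)(1−√t), so that explicitly F_u(1,t) = √((σ²/(2δ))(1−t)) / (u + (c/δ)(1−√t)). Then for all t ∈ (0,1] one has F_u(t,t) ≤ F_u(1,t), i.e. V_Z(t,t)/G_u(t,t) ≤ V_Z(1,t)/G_u(1,t). -/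
/-- For `γ ∈ (0,1)`, `δ, c, σ, u > 0` and all `t ∈ (0,1]`,
`V_Z(t,t)/G_u(t,t) ≤ V_Z(1,t)/G_u(1,t)`, i.e. `F_u(t,t) ≤ F_u(1,t)`, where
`V_Z²(s,t) = (σ²/(2δ))((1−t) − γ(2−γ)(1−s))` and
`G_u(s,t) = u − γ(u+c/δ)(1−√s) + (c/δ)(1−√t)`. -/
theorem Fu_diag_le (γ δ c σ u : ℝ) (hγ : γ ∈ Set.Ioo (0:ℝ) 1) (hδ : 0 < δ)
    (hc : 0 < c) (hσ : 0 < σ) (hu : 0 < u)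
    (V : ℝ → ℝ → ℝ) (G : ℝ → ℝ → ℝ)
    (hV : ∀ s t : ℝ, V s t =
      Real.sqrt (σ ^ 2 / (2 * δ) * ((1 - t) - γ * (2 - γ) * (1 - s))))
    (hG : ∀ s t : ℝ, G s t =
      u - γ * (u + c / δ) * (1 - Real.sqrt s) + c / δ * (1 - Real.sqrt t)) :
    ∀ t : ℝ, 0 < t → t ≤ 1 → V t t / G t t ≤ V 1 t / G 1 t := by
  rintro t ht ht1
  obtain ⟨hγ0, hγ1⟩ := hγ
  have hst1 : Real.sqrt t ≤ 1 := Real.sqrt_le_one.mpr ht1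
  have hst0 : 0 < Real.sqrt t := Real.sqrt_pos.mpr ht
  have hcd : 0 < c / δ := div_pos hc hδ
  have hG1 : 0 < G 1 t := by
    rw [hG, Real.sqrt_one]; nlinarith
  have hGt : 0 < G t t := by
    rw [hG]; nlinarith [mul_nonneg (mul_nonneg (by linarith : (0:ℝ) ≤ 1 - γ) (by positivity : (0:ℝ) ≤ u + c / δ)) (by linarith : (0:ℝ) ≤ 1 - Real.sqrt t), mul_pos hu hst0]
  have key : (1 - γ) * G 1 t ≤ G t t := by
    rw [hG, hG, Real.sqrt_one]; nlinarith [mul_pos (mul_pos hγ0 hu) hst0]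
  have hVt : V t t = (1 - γ) * V 1 t := by
    rw [hV, hV,
      show σ ^ 2 / (2 * δ) * ((1 - t) - γ * (2 - γ) * (1 - t))
        = (1 - γ) ^ 2 * (σ ^ 2 / (2 * δ) * ((1 - t) - γ * (2 - γ) * (1 - 1))) by ring,
      Real.sqrt_mul (by positivity), Real.sqrt_sq (by linarith)]
  have hV1 : 0 ≤ V 1 t := by rw [hV]; positivity
  rw [hVt, div_le_div_iff₀ hGt hG1]
  calc (1 - γ) * V 1 t * G 1 t = V 1 t * ((1 - γ) * G 1 t) := by ring
    _ ≤ V 1 t * G t t := mul_le_mul_of_nonneg_left key hV1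
end
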